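/- Let B be a finite set of permutations. If there exists an integer k such that every permutation in Av(B) has at most k active sites, then Av(B) contains only finitely many vertical alternations. -/

import Mathlib

/-- A list of naturals is a permutation (in one-line notation) of `1,…,n`
where `n` is its length. -/
def IsPermList (l : List ℕ) : Prop :=
  l.Perm ((List.range l.length).map (· + 1))

/-- `f` is an occurrence of the pattern `β` in `π`: a strictly increasing
choice of indices of `π` whose entries are order isomorphic to `β`. -/
def IsOccurrence (π β : List ℕ) (f : Fin β.length → Fin π.length) : Prop :=
  StrictMono f ∧ ∀ s t : Fin β.length, π.get (f s) < π.get (f t) ↔ β.get s < β.get t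

/-- `π` contains the pattern `β`. -/
def PContains (π β : List ℕ) : Prop :=
  ∃ f : Fin β.length → Fin π.length, IsOccurrence π β f

/-- `π` avoids the pattern `β`. -/
def PAvoids (π β : List ℕ) : Prop :=
  ¬ PContains π β

/-- The class of permutations avoiding every member of `B`. -/
def Av (B : Set (List ℕ)) : Set (List ℕ) :=
  {π | IsPermList π ∧ ∀ β ∈ B, PAvoids π β}

/-- Insert a new maximum entry at (0-indexed) position `i` of `l`. -/
def insertMax (l : List ℕ) (i : ℕ) : List ℕ :=
  l.insertIdx i (l.length + 1)

/-- Position `i` is an active site of `l` relative to `B`. -/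
def ActiveSite (B : Set (List ℕ)) (l : List ℕ) (i : ℕ) : Prop :=
  i ≤ l.length ∧ insertMax l i ∈ Av B

/-- The increasing permutation `1,2,…,n`. -/
def incrPerm (n : ℕ) : List ℕ :=
  (List.range n).map (· + 1)

/-- A permutation (as a list) is a vertical alternation: every entry in an even
(1-indexed) position lies above every entry in an odd position, or vice versa.
(Index `s : Fin l.length` corresponds to 1-indexed position `s + 1`.) -/
def VerticalAlternation (l : List ℕ) : Prop :=
  (∀ s t : Fin l.length, s.val % 2 = 1 → t.val % 2 = 0 → l.get t < l.get s) ∨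
  (∀ s t : Fin l.length, s.val % 2 = 1 → t.val % 2 = 0 → l.get s < l.get t)

/-- The subsequence of entries in positions congruent to `r` (0-indexed, mod 2)
is increasing. -/
def IncOnRes (l : List ℕ) (r : ℕ) : Prop :=
  ∀ s t : Fin l.length, s < t → s.val % 2 = r → t.val % 2 = r → l.get s < l.get t

/-- The subsequence of entries in positions congruent to `r` (0-indexed, mod 2)
is decreasing. -/
def DecOnRes (l : List ℕ) (r : ℕ) : Prop :=
  ∀ s t : Fin l.length, s < t → s.val % 2 = r → t.val % 2 = r → l.get t < l.get s

/-- A vertical parallel alternation: a vertical alternation of even length whose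
odd-position and even-position subsequences are both increasing or both decreasing. -/
def IsVertParallel (l : List ℕ) : Prop :=
  VerticalAlternation l ∧ Even l.length ∧
    ((IncOnRes l 0 ∧ IncOnRes l 1) ∨ (DecOnRes l 0 ∧ DecOnRes l 1))

/-- A vertical wedge alternation: a vertical alternation of even length for which one of
the odd-position and even-position subsequences is increasing and the other decreasing. -/
def IsVertWedge (l : List ℕ) : Prop :=
  VerticalAlternation l ∧ Even l.length ∧
    ((IncOnRes l 0 ∧ DecOnRes l 1) ∨ (DecOnRes l 0 ∧ IncOnRes l 1))

/-- The vertical parallel alternation `σ_m`, with `σ_m(2i−1) = m+1−i` and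
`σ_m(2i) = 2m+1−i` (1-indexed). -/
def sigmaAlt (m : ℕ) : List ℕ :=
  (List.range (2 * m)).map (fun j => if j % 2 = 0 then m - j / 2 else 2 * m - j / 2)

/-- The vertical wedge alternation `τ_m`, with `τ_m(2i−1) = m+i` and
`τ_m(2i) = m+1−i` (1-indexed). -/
def tauAlt (m : ℕ) : List ℕ :=
  (List.range (2 * m)).map (fun j => if j % 2 = 0 then m + j / 2 + 1 else m - j / 2)

/-- Standardization: replace each entry of `l` by its rank among the entries of `l`. -/
def stList (l : List ℕ) : List ℕ :=
  l.map (fun x => (l.filter (fun y => y ≤ x)).length)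

/-!
Let `π ∈ Av(B)` be a vertical alternation of length `n`, and call *bottoms* the entries in the
positions of one parity, all of which lie below the *tops* in the positions of the other parity.
The standardized bottom subsequence `σ` lies in `Av(B)`. Re-inserting a single top entry into
the bottom subsequence at its own place gives another subsequence of `π`, whose standardization
is `σ` with a new maximum inserted: so every top yields an active site of `σ`. Two tops are
separated by a bottom, so these sites are distinct; there are at least `(n - 1) / 2` of them,
whence `n ≤ 2k + 1`, and there are only finitely many permutations of bounded length.
-/

open List

theorem List.insertIdx_length_append {α : Type*} (l₁ l₂ : List α) (a : α) :
    (l₁ ++ l₂).insertIdx l₁.length a = l₁ ++ a :: l₂ := by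
  induction l₁ with
  | nil => rfl
  | cons b l ih => simp [insertIdx_succ_cons, ih]

theorem List.map_getD_range_length (l : List ℕ) : (range l.length).map (l.getD · 0) = l :=
  ext_getElem (by simp) fun i _ hi => by simp [getElem?_eq_getElem hi]

theorem IsPermList.nodup {l : List ℕ} (h : IsPermList l) : l.Nodup :=
  h.nodup_iff.2 (nodup_range.map (add_left_injective 1))

theorem finite_setOf_isPermList_length_le (N : ℕ) :
    {l : List ℕ | IsPermList l ∧ l.length ≤ N}.Finite :=
  ((Set.finite_Iic N).biUnion fun m _ => ((range m).map (· + 1)).permutations.finite_toSet).subset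
    fun l ⟨hl, hN⟩ => Set.mem_biUnion (x := l.length) hN (mem_permutations.2 hl)

def entryRank (l : List ℕ) (x : ℕ) : ℕ :=
  (l.filter (fun y => y ≤ x)).length

theorem stList_eq_map_entryRank (l : List ℕ) : stList l = l.map (entryRank l) := rfl

@[simp]
theorem length_stList (l : List ℕ) : (stList l).length = l.length := length_map _

theorem entryRank_le_length (l : List ℕ) (x : ℕ) : entryRank l x ≤ l.length :=
  length_filter_le _ _

theorem one_le_entryRank {l : List ℕ} {x : ℕ} (hx : x ∈ l) : 1 ≤ entryRank l x :=
  length_pos_iff_exists_mem.2 ⟨x, mem_filter.2 ⟨hx, by simp⟩⟩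

theorem entryRank_lt_entryRank_iff {l : List ℕ} {a b : ℕ} (hb : b ∈ l) :
    entryRank l a < entryRank l b ↔ a < b := by
  have hsub : ∀ {c d : ℕ}, c ≤ d → l.filter (· ≤ c) <+ l.filter (· ≤ d) := fun hcd =>
    monotone_filter_right l fun x hx => by simp only [decide_eq_true_eq] at hx ⊢; omega
  constructor
  · intro h
    by_contra! hba
    exact (hsub hba).length_le.not_gt h
  · intro hab
    refine (hsub hab.le).length_le.lt_of_ne fun heq => ?_
    have hb' : b ∈ l.filter (· ≤ b) := mem_filter.2 ⟨hb, by simp⟩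
    rw [← (hsub hab.le).eq_of_length heq, mem_filter] at hb'
    simp only [decide_eq_true_eq] at hb'
    omega

theorem isPermList_stList {l : List ℕ} (hl : l.Nodup) : IsPermList (stList l) := by
  rw [stList_eq_map_entryRank]
  have hnodup : (l.map (entryRank l)).Nodup := by
    refine hl.map_on fun x hx y hy hxy => ?_
    have := (entryRank_lt_entryRank_iff hx (a := y)).not
    have := (entryRank_lt_entryRank_iff hy (a := x)).not
    omega
  have hsub : l.map (entryRank l) ⊆ (range l.length).map (· + 1) := by
    intro x hx
    obtain ⟨y, hy, rfl⟩ := mem_map.1 hx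
    have := one_le_entryRank hy
    have := entryRank_le_length l y
    exact mem_map.2 ⟨entryRank l y - 1, mem_range.2 (by omega), by omega⟩
  unfold IsPermList
  rw [length_map]
  exact (hnodup.subperm hsub).perm_of_length_le (by simp)

/-- Standardization preserves relative order, so an occurrence of `β` in `stList l'` is one
in `π`. -/
theorem PAvoids.stList_of_sublist {π l' β : List ℕ} (hav : PAvoids π β) (hsub : l' <+ π) :
    PAvoids (stList l') β := by
  rintro ⟨f, hf_mono, hf_iso⟩
  obtain ⟨g, hg⟩ := sublist_iff_exists_fin_orderEmbedding_get_eq.1 hsub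
  have hget : ∀ u : Fin (stList l').length,
      (stList l').get u = entryRank l' (l'.get (u.cast (length_stList l'))) :=
    fun u => getElem_map _
  refine hav ⟨fun s => g ((f s).cast (length_stList l')), fun s t hst => g.strictMono ?_, ?_⟩
  · simpa only [Fin.lt_def, Fin.val_cast] using hf_mono hst
  · intro s t
    rw [← hf_iso s t, ← hg, ← hg, hget, hget]
    exact (entryRank_lt_entryRank_iff (get_mem _ _)).symm

theorem stList_mem_Av {B : Set (List ℕ)} {π l' : List ℕ} (hπ : π ∈ Av B) (hsub : l' <+ π) :
    stList l' ∈ Av B :=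
  ⟨isPermList_stList (hsub.nodup hπ.1.nodup), fun β hβ => (hπ.2 β hβ).stList_of_sublist hsub⟩

theorem stList_insertIdx_of_forall_lt {l : List ℕ} {v q : ℕ} (hq : q ≤ l.length)
    (hv : ∀ x ∈ l, x < v) : stList (l.insertIdx q v) = insertMax (stList l) q := by
  have hperm := perm_insertIdx v l hq
  have hrank_old : ∀ x ∈ l, entryRank (l.insertIdx q v) x = entryRank l x := fun x hx => by
    rw [entryRank, (hperm.filter _).length_eq,
      filter_cons_of_neg (by simpa using hv x hx), entryRank]
  have hrank_new : entryRank (l.insertIdx q v) v = l.length + 1 := by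
    rw [entryRank, (hperm.filter _).length_eq, filter_cons_of_pos (by simp),
      filter_eq_self.2 fun x hx => by simpa using (hv x hx).le, length_cons]
  rw [stList_eq_map_entryRank, map_insertIdx, hrank_new, map_congr_left hrank_old, insertMax,
    stList_eq_map_entryRank, length_map]

def subseqAt (π : List ℕ) (p : ℕ → Prop) [DecidablePred p] : List ℕ :=
  ((range π.length).filter p).map (π.getD · 0)

theorem subseqAt_sublist (π : List ℕ) (p : ℕ → Prop) [DecidablePred p] : subseqAt π p <+ π := by
  simpa only [subseqAt, map_getD_range_length] using
    (filter_sublist (p := fun i => decide (p i)) (l := range π.length)).map (π.getD · 0)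

theorem filter_range_or_eq (p : ℕ → Prop) [DecidablePred p] {j n : ℕ} (hpj : ¬ p j) (hj : j < n) :
    (range n).filter (fun i => p i ∨ i = j) = ((range n).filter p).insertIdx (Nat.count p j) j := by
  obtain ⟨m, rfl⟩ : ∃ m, n = j + 1 + m := ⟨n - j - 1, by omega⟩
  have hbelow : (range j).filter (fun i => p i ∨ i = j) = (range j).filter p :=
    filter_congr fun i hi => by simp [(mem_range.1 hi).ne]
  have habove : ((range m).map (j + 1 + ·)).filter (fun i => p i ∨ i = j) =
      ((range m).map (j + 1 + ·)).filter p :=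
    filter_congr fun i hi => by
      obtain ⟨i, -, rfl⟩ := mem_map.1 hi
      simp [show j + 1 + i ≠ j by omega]
  have hcount : Nat.count p j = ((range j).filter p).length := by
    simp [Nat.count, countP_eq_length_filter]
  rw [range_add, range_succ, filter_append, filter_append, filter_append, filter_append, hbelow,
    habove, hcount, append_assoc, append_assoc, insertIdx_length_append]
  simp [hpj]

theorem activeSite_stList_subseqAt {B : Set (List ℕ)} {π : List ℕ} (hπ : π ∈ Av B)
    (p : ℕ → Prop) [DecidablePred p] {j : ℕ} (hj : j < π.length) (hpj : ¬ p j)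
    (hmax : ∀ i < π.length, p i → π.getD i 0 < π.getD j 0) :
    ActiveSite B (stList (subseqAt π p)) (Nat.count p j) := by
  have hinsert : subseqAt π (fun i => p i ∨ i = j) =
      (subseqAt π p).insertIdx (Nat.count p j) (π.getD j 0) := by
    rw [subseqAt, subseqAt, filter_range_or_eq p hpj hj, map_insertIdx]
  have hcount : Nat.count p j ≤ (subseqAt π p).length := by
    simpa [subseqAt, Nat.count, countP_eq_length_filter] using Nat.count_monotone p hj.le
  have hlt : ∀ x ∈ subseqAt π p, x < π.getD j 0 := by
    simp only [subseqAt, mem_map, mem_filter, mem_range, decide_eq_true_eq]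
    rintro x ⟨i, ⟨hi, hpi⟩, rfl⟩
    exact hmax i hi hpi
  refine ⟨by rwa [length_stList], ?_⟩
  rw [← stList_insertIdx_of_forall_lt hcount hlt, ← hinsert]
  exact stList_mem_Av hπ (subseqAt_sublist π _)

section VerticalAlternations

variable {B : Set (List ℕ)} {k : ℕ}

theorem length_le_of_parity_separated (hk : ∀ σ ∈ Av B, {i | ActiveSite B σ i}.ncard ≤ k)
    {π : List ℕ} (hπ : π ∈ Av B) {r : ℕ} (hr : r ≤ 1)
    (hsep : ∀ i < π.length, ∀ j < π.length, i % 2 = r → j % 2 ≠ r → π.getD i 0 < π.getD j 0) :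
    π.length ≤ 2 * k + 1 := by
  let p : ℕ → Prop := (· % 2 = r)
  let σ := stList (subseqAt π p)
  -- the `t`-th top sits at position `2 t + 1 - r`
  let site : ℕ → ℕ := fun t => Nat.count p (2 * t + 1 - r)
  have hsite_mono : StrictMono site := strictMono_nat_of_lt_succ fun t =>
    (Nat.count_monotone p (by omega : 2 * t + 1 - r ≤ 2 * t + 2 - r)).trans_lt
      (Nat.count_strict_mono (by simp only [p]; omega) (by omega))
  have hsites : ((Finset.range ((π.length + r) / 2)).image site : Set ℕ) ⊆
      {i | ActiveSite B σ i} := by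
    intro i hi
    obtain ⟨t, ht, rfl⟩ := Finset.mem_image.1 hi
    rw [Finset.mem_range] at ht
    exact activeSite_stList_subseqAt hπ p (by omega) (by simp only [p]; omega)
      fun i hi hpi => hsep i hi _ (by omega) hpi (by omega)
  have hfin : {i | ActiveSite B σ i}.Finite :=
    (Set.finite_Iic σ.length).subset fun i hi => hi.1
  have hcard := (Set.ncard_le_ncard hsites hfin).trans
    (hk σ (stList_mem_Av hπ (subseqAt_sublist π p)))
  rw [Set.ncard_coe_finset, Finset.card_image_of_injective _ hsite_mono.injective,
    Finset.card_range] at hcard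
  omega

theorem length_le_of_verticalAlternation (hk : ∀ σ ∈ Av B, {i | ActiveSite B σ i}.ncard ≤ k)
    {π : List ℕ} (hπ : π ∈ Av B) (hva : VerticalAlternation π) : π.length ≤ 2 * k + 1 := by
  rcases hva with hva | hva
  · refine length_le_of_parity_separated hk hπ zero_le_one fun i hi j hj hi0 hj0 => ?_
    simpa only [getD_eq_getElem _ _ hi, getD_eq_getElem _ _ hj, get_eq_getElem] using
      hva ⟨j, hj⟩ ⟨i, hi⟩ (show j % 2 = 1 by omega) hi0
  · refine length_le_of_parity_separated hk hπ le_rfl fun i hi j hj hi1 hj1 => ?_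
    simpa only [getD_eq_getElem _ _ hi, getD_eq_getElem _ _ hj, get_eq_getElem] using
      hva ⟨i, hi⟩ ⟨j, hj⟩ hi1 (show j % 2 = 0 by omega)

end VerticalAlternations

theorem stmt1_general (B : Set (List ℕ))
    (h : ∃ k : ℕ, ∀ π ∈ Av B, {i : ℕ | ActiveSite B π i}.ncard ≤ k) :
    {π ∈ Av B | VerticalAlternation π}.Finite := by
  obtain ⟨k, hk⟩ := h
  refine (finite_setOf_isPermList_length_le (2 * k + 1)).subset ?_
  rintro π ⟨hπ, hva⟩
  exact ⟨hπ.1, length_le_of_verticalAlternation hk hπ hva⟩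

/-- if there is a uniform bound on the number of active sites of
permutations in `Av(B)`, then `Av(B)` contains only finitely many vertical alternations. -/
theorem stmt1 (B : Set (List ℕ)) (hBfin : B.Finite) (hB : ∀ β ∈ B, IsPermList β)
    (h : ∃ k : ℕ, ∀ π ∈ Av B, {i : ℕ | ActiveSite B π i}.ncard ≤ k) :
    {π ∈ Av B | VerticalAlternation π}.Finite :=
  stmt1_general B h
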